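/- arXiv:2305.05106 — 2 statements merged into one kernel-verified Lean document; each statement's English description precedes it below -/
import Mathlib

section
/- Let Y be a positive random variable whose survival function is of Hall class with parameters γ > 0, α > 0, c₀ > 0, c₁ ∈ ℝ and c₁ ≠ 0. Then, as ω → ∞, [P(Y > ω) − γ^(−1) ∫₀^∞ P(Y > ω e^s) ds] · (1 + γα) / (c₁ γ α) · ω^(1/γ + α) → 1; in other words P(Y > ω) − γ^(−1) ∫₀^∞ P(Y > ω e^s) ds = (c₁ γ α / (1 + γα)) ω^(−1/γ − α) (1 + o(1)). -/
open MeasureTheory ProbabilityTheory Filter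
open Set

lemma integral_exp_neg_mul_Ioi_zero {b : ℝ} (hb : 0 < b) :
    ∫ s in Ioi (0:ℝ), Real.exp (-(b * s)) = b⁻¹ := by
  have := MeasureTheory.integral_comp_mul_left_Ioi (fun x => Real.exp (-x)) 0 hb
  simp only [mul_zero, integral_exp_neg_Ioi_zero, smul_eq_mul, mul_one] at this
  exact this

lemma integrableOn_exp_neg_mul {b : ℝ} (hb : 0 < b) :
    IntegrableOn (fun s => Real.exp (-(b * s))) (Ioi (0:ℝ)) := by
  simpa [neg_mul] using exp_neg_integrableOn_Ioi 0 hb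

lemma exp_rpow' (s r : ℝ) : Real.exp s ^ r = Real.exp (s * r) := by
  rw [Real.rpow_def_of_pos (Real.exp_pos s), Real.log_exp]


set_option maxHeartbeats 1000000 in
/-- asymptotic bias of the score for a Hall-class survival function with
`c₁ ≠ 0`:
`[P(Y > ω) − γ⁻¹ ∫₀^∞ P(Y > ω e^s) ds] · (1 + γα)/(c₁γα) · ω^(1/γ + α) → 1` as `ω → ∞`. -/
theorem hall_class_score_bias
    {Ω : Type*} [MeasurableSpace Ω] (μ : Measure Ω) [IsProbabilityMeasure μ]
    (Y : Ω → ℝ) (hYm : Measurable Y) (hYpos : ∀ x, 0 < Y x)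
    (γ α c₀ c₁ : ℝ) (hγ : 0 < γ) (hα : 0 < α) (hc₀ : 0 < c₀) (hc₁ : c₁ ≠ 0)
    (ε : ℝ → ℝ)
    (hHall : ∃ y₀ : ℝ, ∀ y ≥ y₀,
      (μ {x | Y x > y}).toReal = y ^ (-(1 / γ)) * (c₀ + c₁ * y ^ (-α) + ε y))
    (hε : Tendsto (fun y : ℝ => y ^ α * ε y) atTop (nhds 0)) :
    Tendsto (fun ω : ℝ =>
        ((μ {x | Y x > ω}).toReal
            - γ⁻¹ * ∫ s in Set.Ioi (0 : ℝ), (μ {x | Y x > ω * Real.exp s}).toReal)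
          * ((1 + γ * α) / (c₁ * γ * α)) * ω ^ (1 / γ + α))
      atTop (nhds 1) := by
  obtain ⟨y₀, hy₀⟩ := hHall
  set G : ℝ → ℝ := fun ω => (μ {x | Y x > ω}).toReal with hGdef
  have hGanti : Antitone G := by
    intro a b hab
    exact ENNReal.toReal_mono (measure_ne_top μ _)
      (measure_mono (fun x hx => lt_of_le_of_lt hab hx))
  have hGm : Measurable G := hGanti.measurable
  set p : ℝ := 1 / γ with hpdef
  set q : ℝ := 1 / γ + α with hqdef
  have hppos : 0 < p := by rw [hpdef]; positivity
  have hqpos : 0 < q := by rw [hqdef]; positivity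
  have hy₀' : ∀ y : ℝ, y₀ ≤ y → G y = y ^ (-p) * (c₀ + c₁ * y ^ (-α) + ε y) :=
    fun y hy => hy₀ y hy
  set C : ℝ := (1 + γ * α) / (c₁ * γ * α) with hCdef
  -- measurable versions of ε and of h y = y^α ε y
  set εm : ℝ → ℝ := fun y => G y * y ^ p - c₀ - c₁ * y ^ (-α) with hεmdef
  set hm : ℝ → ℝ := fun y => y ^ α * εm y with hhmdef
  have hhm_meas : Measurable hm := by
    rw [hhmdef, hεmdef]
    have h1 : Measurable fun y : ℝ => y ^ α := by measurability
    have h2 : Measurable fun y : ℝ => y ^ p := by measurability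
    have h3 : Measurable fun y : ℝ => y ^ (-α) := by measurability
    exact h1.mul (((hGm.mul h2).sub measurable_const).sub (measurable_const.mul h3))
  -- hm agrees with y^α ε y for large y
  have hεm_eq : ∀ y : ℝ, 1 ≤ y → y₀ ≤ y → εm y = ε y := by
    intro y h1 h2
    have hy : (0:ℝ) < y := lt_of_lt_of_le one_pos h1
    have hcancel : y ^ (-p) * y ^ p = 1 := by
      rw [← Real.rpow_add hy, neg_add_cancel, Real.rpow_zero]
    rw [hεmdef]
    simp only [hy₀' y h2]
    linear_combination (c₀ + c₁ * y ^ (-α) + ε y) * hcancel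
  have hm_eq : ∀ y : ℝ, 1 ≤ y → y₀ ≤ y → hm y = y ^ α * ε y := by
    intro y h1 h2
    rw [hhmdef]; simp only [hεm_eq y h1 h2]
  -- key pointwise decomposition of G
  have hGdec : ∀ y : ℝ, 1 ≤ y → y₀ ≤ y →
      G y = c₀ * y ^ (-p) + c₁ * y ^ (-q) + y ^ (-q) * hm y := by
    intro y h1 h2
    have hy : (0:ℝ) < y := lt_of_lt_of_le one_pos h1
    have hA : y ^ (-p) * y ^ (-α) = y ^ (-q) := by
      rw [← Real.rpow_add hy, hqdef, hpdef]; ring_nf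
    have hB : y ^ (-q) * y ^ α = y ^ (-p) := by
      rw [← Real.rpow_add hy, hqdef, hpdef]; ring_nf
    rw [hy₀' y h2, hhmdef]
    simp only [hεm_eq y h1 h2]
    calc y ^ (-p) * (c₀ + c₁ * y ^ (-α) + ε y)
        = c₀ * y ^ (-p) + c₁ * (y ^ (-p) * y ^ (-α)) + (y ^ (-q) * y ^ α) * ε y := by
          rw [hB]; ring
      _ = c₀ * y ^ (-p) + c₁ * y ^ (-q) + y ^ (-q) * (y ^ α * ε y) := by rw [hA]; ring
  -- bound |y^α ε y| ≤ 1 eventually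
  obtain ⟨Y₁, hY₁⟩ := eventually_atTop.mp
    ((NormedAddCommGroup.tendsto_nhds_zero.mp hε) 1 one_pos)
  set Λ : ℝ := max (max y₀ Y₁) 1 with hΛdef
  -- the simplified function
  set F : ℝ → ℝ := fun ω =>
    (c₁ * (1 - γ⁻¹ * q⁻¹) + hm ω
      - γ⁻¹ * ∫ s in Ioi (0:ℝ), Real.exp (-(q * s)) * hm (ω * Real.exp s)) * C with hFdef
  have hEq : ∀ᶠ ω in atTop,
      ((μ {x | Y x > ω}).toReal
            - γ⁻¹ * ∫ s in Set.Ioi (0 : ℝ), (μ {x | Y x > ω * Real.exp s}).toReal)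
          * ((1 + γ * α) / (c₁ * γ * α)) * ω ^ (1 / γ + α) = F ω := by
    filter_upwards [eventually_ge_atTop Λ] with ω hω
    have hω1 : (1:ℝ) ≤ ω := le_trans (le_max_right _ _) hω
    have hωy₀ : y₀ ≤ ω := le_trans (le_trans (le_max_left _ _) (le_max_left _ _)) hω
    have hωY₁ : Y₁ ≤ ω := le_trans (le_trans (le_max_right _ _) (le_max_left _ _)) hω
    have hωpos : (0:ℝ) < ω := lt_of_lt_of_le one_pos hω1
    have hmono : ∀ s : ℝ, 0 < s → ω ≤ ω * Real.exp s := fun s hs =>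
      le_mul_of_one_le_right hωpos.le (Real.one_le_exp hs.le)
    -- pointwise identity for the integrand
    have hpt : ∀ s ∈ Ioi (0:ℝ), G (ω * Real.exp s) =
        c₀ * ω ^ (-p) * Real.exp (-(p * s)) + c₁ * ω ^ (-q) * Real.exp (-(q * s))
          + ω ^ (-q) * (Real.exp (-(q * s)) * hm (ω * Real.exp s)) := by
      intro s hs
      have hy := hmono s hs
      have h1 : (ω * Real.exp s) ^ (-p) = ω ^ (-p) * Real.exp (-(p * s)) := by
        rw [Real.mul_rpow hωpos.le (Real.exp_pos s).le, exp_rpow',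
          show s * -p = -(p * s) by ring]
      have h2 : (ω * Real.exp s) ^ (-q) = ω ^ (-q) * Real.exp (-(q * s)) := by
        rw [Real.mul_rpow hωpos.le (Real.exp_pos s).le, exp_rpow',
          show s * -q = -(q * s) by ring]
      rw [hGdec (ω * Real.exp s) (le_trans hω1 hy) (le_trans hωy₀ hy), h1, h2]
      ring
    -- integrabilities
    have hint1 : IntegrableOn (fun s => c₀ * ω ^ (-p) * Real.exp (-(p * s))) (Ioi (0:ℝ)) :=
      (integrableOn_exp_neg_mul hppos).const_mul _
    have hint2 : IntegrableOn (fun s => c₁ * ω ^ (-q) * Real.exp (-(q * s))) (Ioi (0:ℝ)) :=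
      (integrableOn_exp_neg_mul hqpos).const_mul _
    have hint3' : IntegrableOn (fun s => Real.exp (-(q * s)) * hm (ω * Real.exp s)) (Ioi (0:ℝ)) := by
      apply Integrable.mono' (integrableOn_exp_neg_mul hqpos)
      · apply Measurable.aestronglyMeasurable
        have : Measurable fun s : ℝ => Real.exp (-(q * s)) :=
          ((measurable_id.const_mul q).neg).exp
        exact this.mul (hhm_meas.comp (measurable_const.mul Real.measurable_exp))
      · refine (ae_restrict_iff' measurableSet_Ioi).2 ?_
        filter_upwards with s hs
        have hy := hmono s hs
        rw [hm_eq _ (le_trans hω1 hy) (le_trans hωy₀ hy)]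
        rw [norm_mul, Real.norm_eq_abs, Real.norm_eq_abs,
          abs_of_pos (Real.exp_pos _)]
        have hb := hY₁ (ω * Real.exp s) (le_trans hωY₁ hy)
        rw [Real.norm_eq_abs] at hb
        calc Real.exp (-(q*s)) * |(ω * Real.exp s) ^ α * ε (ω * Real.exp s)|
            ≤ Real.exp (-(q*s)) * 1 := by
              apply mul_le_mul_of_nonneg_left hb.le (Real.exp_pos _).le
          _ = Real.exp (-(q*s)) := mul_one _
    have hint3 : IntegrableOn
        (fun s => ω ^ (-q) * (Real.exp (-(q * s)) * hm (ω * Real.exp s))) (Ioi (0:ℝ)) :=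
      hint3'.const_mul _
    -- compute the integral
    have hIntegral : (∫ s in Ioi (0:ℝ), G (ω * Real.exp s))
        = c₀ * ω ^ (-p) * γ + c₁ * ω ^ (-q) * q⁻¹
          + ω ^ (-q) * ∫ s in Ioi (0:ℝ), Real.exp (-(q * s)) * hm (ω * Real.exp s) := by
      have hint12 : IntegrableOn (fun s => c₀ * ω ^ (-p) * Real.exp (-(p * s))
          + c₁ * ω ^ (-q) * Real.exp (-(q * s))) (Ioi (0:ℝ)) := hint1.add hint2
      rw [setIntegral_congr_fun measurableSet_Ioi hpt]
      rw [integral_add hint12 hint3, integral_add hint1 hint2]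
      rw [integral_const_mul, integral_const_mul, integral_const_mul,
        integral_exp_neg_mul_Ioi_zero hppos, integral_exp_neg_mul_Ioi_zero hqpos]
      rw [hpdef]
      simp [one_div]
    -- assemble
    have hZW : ω ^ (-q) * ω ^ q = 1 := by
      rw [← Real.rpow_add hωpos, neg_add_cancel, Real.rpow_zero]
    have hγγ : γ⁻¹ * γ = 1 := inv_mul_cancel₀ hγ.ne'
    show (G ω - γ⁻¹ * ∫ s in Ioi (0:ℝ), G (ω * Real.exp s)) * C * ω ^ q = F ω
    rw [hIntegral, hGdec ω hω1 hωy₀, hFdef]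
    set A := ∫ s in Ioi (0:ℝ), Real.exp (-(q * s)) * hm (ω * Real.exp s)
    have key : c₀ * ω ^ (-p) + c₁ * ω ^ (-q) + ω ^ (-q) * hm ω
        - γ⁻¹ * (c₀ * ω ^ (-p) * γ + c₁ * ω ^ (-q) * q⁻¹ + ω ^ (-q) * A)
        = ω ^ (-q) * (c₁ * (1 - γ⁻¹ * q⁻¹) + hm ω - γ⁻¹ * A) := by
      linear_combination (-(c₀ * ω ^ (-p))) * hγγ
    rw [key]
    calc ω ^ (-q) * (c₁ * (1 - γ⁻¹ * q⁻¹) + hm ω - γ⁻¹ * A) * C * ω ^ q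
        = (c₁ * (1 - γ⁻¹ * q⁻¹) + hm ω - γ⁻¹ * A) * C * (ω ^ (-q) * ω ^ q) := by ring
      _ = (c₁ * (1 - γ⁻¹ * q⁻¹) + hm ω - γ⁻¹ * A) * C := by rw [hZW, mul_one]
  -- limits
  have h_hm : Tendsto hm atTop (nhds 0) := by
    apply hε.congr'
    filter_upwards [eventually_ge_atTop (max y₀ 1)] with y hy
    exact (hm_eq y (le_trans (le_max_right _ _) hy) (le_trans (le_max_left _ _) hy)).symm
  have h_I : Tendsto (fun ω => ∫ s in Ioi (0:ℝ), Real.exp (-(q * s)) * hm (ω * Real.exp s))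
      atTop (nhds 0) := by
    rw [NormedAddCommGroup.tendsto_nhds_zero]
    intro δ hδ
    obtain ⟨Y₂, hY₂⟩ := eventually_atTop.mp
      ((NormedAddCommGroup.tendsto_nhds_zero.mp hε) (δ * q / 2) (by positivity))
    filter_upwards [eventually_ge_atTop (max (max y₀ Y₂) 1)] with ω hω
    have hω1 : (1:ℝ) ≤ ω := le_trans (le_max_right _ _) hω
    have hωy₀ : y₀ ≤ ω := le_trans (le_trans (le_max_left _ _) (le_max_left _ _)) hω
    have hωY₂ : Y₂ ≤ ω := le_trans (le_trans (le_max_right _ _) (le_max_left _ _)) hω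
    have hωpos : (0:ℝ) < ω := lt_of_lt_of_le one_pos hω1
    have hbound : ‖∫ s in Ioi (0:ℝ), Real.exp (-(q * s)) * hm (ω * Real.exp s)‖
        ≤ ∫ s in Ioi (0:ℝ), (δ * q / 2) * Real.exp (-(q * s)) := by
      apply norm_integral_le_of_norm_le ((integrableOn_exp_neg_mul hqpos).const_mul _)
      refine (ae_restrict_iff' measurableSet_Ioi).2 ?_
      filter_upwards with s hs
      have hy : ω ≤ ω * Real.exp s :=
        le_mul_of_one_le_right hωpos.le (Real.one_le_exp hs.le)
      rw [hm_eq _ (le_trans hω1 hy) (le_trans hωy₀ hy), norm_mul, Real.norm_eq_abs,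
        Real.norm_eq_abs, abs_of_pos (Real.exp_pos _)]
      have hb := hY₂ (ω * Real.exp s) (le_trans hωY₂ hy)
      rw [Real.norm_eq_abs] at hb
      calc Real.exp (-(q*s)) * |(ω * Real.exp s) ^ α * ε (ω * Real.exp s)|
          ≤ Real.exp (-(q*s)) * (δ * q / 2) :=
            mul_le_mul_of_nonneg_left hb.le (Real.exp_pos _).le
        _ = (δ * q / 2) * Real.exp (-(q*s)) := by ring
    have hval : (∫ s in Ioi (0:ℝ), (δ * q / 2) * Real.exp (-(q * s))) = δ / 2 := by
      rw [integral_const_mul, integral_exp_neg_mul_Ioi_zero hqpos]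
      field_simp
    rw [hval] at hbound
    linarith
  have harith : (c₁ * (1 - γ⁻¹ * q⁻¹) + 0 - γ⁻¹ * 0) * C = 1 := by
    rw [hCdef, hqdef]
    have h1 : (1:ℝ)/γ + α ≠ 0 := by positivity
    have h2 : (1:ℝ) + γ * α ≠ 0 := by positivity
    field_simp
    ring
  have hFlim : Tendsto F atTop (nhds 1) := by
    rw [hFdef]
    have := (((tendsto_const_nhds (x := c₁ * (1 - γ⁻¹ * q⁻¹)) (f := atTop)).add h_hm).sub
      (h_I.const_mul γ⁻¹)).mul_const C
    rwa [harith] at this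
  exact hFlim.congr' (EventuallyEq.symm hEq)
end

section
/- Let Y be a positive random variable whose survival function is of Hall class with parameters γ > 0, α > 0, c₀ > 0, c₁ ∈ ℝ. Then E[(1 − γ^(−1) log(Y/ω))² · 1{Y > ω}] / P(Y > ω) → 1 as ω → ∞; that is, the conditional second moment of the score term 1 − γ^(−1) log(Y/ω) given Y > ω converges to 1. -/
open MeasureTheory Filter Set Real Topology
open scoped Nat

/-!
By the Hall expansion, `P(Y > ω e^{γt}) / P(Y > ω) → e^{-t}`, and for large `ω` this ratio is
at most `4 e^{-t}` uniformly in `t ≥ 0`. So, given `Y > ω`, the excess `E = γ⁻¹ log (Y / ω)`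
is asymptotically standard exponential, and the layer-cake formula together with dominated
convergence gives `E[E ^ k | Y > ω] → k!`. The score's conditional second moment is
`1 - 2 E[E | Y > ω] + E[E ^ 2 | Y > ω] → 1 - 2 + 2 = 1`.
-/

lemma integrableOn_pow_mul_exp_neg (k : ℕ) :
    IntegrableOn (fun t : ℝ => t ^ k * exp (-t)) (Ioi 0) := by
  refine (GammaIntegral_convergent (s := k + 1) (by positivity)).congr_fun
    (fun t _ => ?_) measurableSet_Ioi
  simp [mul_comm]

lemma integral_pow_mul_exp_neg (k : ℕ) : ∫ t in Ioi (0 : ℝ), t ^ k * exp (-t) = k ! := by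
  rw [← Gamma_nat_eq_factorial, Gamma_eq_integral (by positivity)]
  refine setIntegral_congr_fun measurableSet_Ioi fun t _ => ?_
  simp [mul_comm]

lemma integrable_pow_succ_and_integral_eq_integral_meas_lt {α : Type*}
    [MeasurableSpace α] {μ : Measure α} [IsFiniteMeasure μ] {X : α → ℝ} (hX : 0 ≤ X)
    (hXm : Measurable X) (k : ℕ)
    (hint : IntegrableOn (fun t => t ^ k * μ.real {a | t < X a}) (Ioi 0)) :
    Integrable (fun a => X a ^ (k + 1)) μ ∧
      ∫ a, X a ^ (k + 1) ∂μ = (k + 1) * ∫ t in Ioi 0, t ^ k * μ.real {a | t < X a} := by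
  have hcake := lintegral_comp_eq_lintegral_meas_lt_mul μ (ae_of_all _ hX) hXm.aemeasurable
    (g := fun t => ((k : ℝ) + 1) * t ^ k)
    (fun _ _ => (by fun_prop : Continuous _).intervalIntegrable _ _)
    (ae_restrict_of_forall_mem measurableSet_Ioi fun t (ht : 0 < t) => by positivity)
  have hantideriv (a : α) : ∫ t in (0 : ℝ)..X a, ((k : ℝ) + 1) * t ^ k = X a ^ (k + 1) := by
    rw [intervalIntegral.integral_const_mul, integral_pow]
    field_simp
    simp
  have hrhs : ∫⁻ t in Ioi 0, μ {a | t < X a} * ENNReal.ofReal (((k : ℝ) + 1) * t ^ k) =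
      ENNReal.ofReal ((k + 1) * ∫ t in Ioi 0, t ^ k * μ.real {a | t < X a}) := by
    rw [← integral_const_mul, ofReal_integral_eq_lintegral_ofReal (hint.const_mul _)
      (ae_restrict_of_forall_mem measurableSet_Ioi fun t (ht : 0 < t) => by positivity)]
    refine setLIntegral_congr_fun measurableSet_Ioi fun t _ => ?_
    rw [← ofReal_measureReal (measure_ne_top _ _), ← ENNReal.ofReal_mul measureReal_nonneg]
    congr 1
    ring
  simp_rw [hantideriv] at hcake
  rw [hrhs] at hcake
  have hnn : 0 ≤ᵐ[μ] fun a => X a ^ (k + 1) := ae_of_all _ fun a => pow_nonneg (hX a) _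
  have hXint : Integrable (fun a => X a ^ (k + 1)) μ :=
    ⟨(hXm.pow_const _).aestronglyMeasurable,
      (hasFiniteIntegral_iff_ofReal hnn).2 (hcake ▸ ENNReal.ofReal_lt_top)⟩
  refine ⟨hXint, ?_⟩
  rw [integral_eq_lintegral_of_nonneg_ae hnn hXint.aestronglyMeasurable, hcake,
    ENNReal.toReal_ofReal]
  exact mul_nonneg (by positivity) (setIntegral_nonneg measurableSet_Ioi
    fun t (ht : 0 < t) => mul_nonneg (by positivity) measureReal_nonneg)

lemma tendsto_setIntegral_pow_mul_of_tendsto_exp_neg {ι : Type*} {l : Filter ι}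
    [l.IsCountablyGenerated] {F : ι → ℝ → ℝ} {C : ℝ} (k : ℕ)
    (hFm : ∀ᶠ i in l, AEStronglyMeasurable (F i) (volume.restrict (Ioi 0)))
    (hF_le : ∀ᶠ i in l, ∀ t > 0, |F i t| ≤ C * exp (-t))
    (hF_lim : ∀ t > 0, Tendsto (fun i => F i t) l (𝓝 (exp (-t)))) :
    Tendsto (fun i => ∫ t in Ioi 0, t ^ k * F i t) l (𝓝 (k ! : ℝ)) := by
  rw [← integral_pow_mul_exp_neg]
  refine tendsto_integral_filter_of_dominated_convergence (fun t => C * (t ^ k * exp (-t)))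
    ?_ ?_ ((integrableOn_pow_mul_exp_neg k).const_mul C) ?_
  · filter_upwards [hFm] with i hi
    exact (continuous_pow k).aestronglyMeasurable.mul hi
  · filter_upwards [hF_le] with i hi
    refine ae_restrict_of_forall_mem measurableSet_Ioi fun t (ht : 0 < t) => ?_
    rw [norm_mul, norm_pow, Real.norm_of_nonneg ht.le, Real.norm_eq_abs, mul_left_comm]
    exact mul_le_mul_of_nonneg_left (hi t ht) (by positivity)
  · exact ae_restrict_of_forall_mem measurableSet_Ioi fun t ht =>
      (hF_lim t ht).const_mul _

lemma antitone_measureReal_lt {α : Type*} [MeasurableSpace α] (μ : Measure α)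
    [IsFiniteMeasure μ] (X : α → ℝ) : Antitone fun t => μ.real {a | t < X a} :=
  fun _ _ hst => measureReal_mono fun _ ha => hst.trans_lt ha

lemma tendsto_integral_pow_succ_div_of_tendsto_exp_neg {ι α : Type*} {l : Filter ι}
    [l.IsCountablyGenerated] [MeasurableSpace α] {μ : Measure α} [IsFiniteMeasure μ]
    {X : ι → α → ℝ} {s : ι → ℝ} {C : ℝ} (k : ℕ) (hX : ∀ i, 0 ≤ X i)
    (hXm : ∀ i, Measurable (X i)) (hs : ∀ᶠ i in l, 0 < s i)
    (h_le : ∀ᶠ i in l, ∀ t > 0, μ.real {a | t < X i a} ≤ C * exp (-t) * s i)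
    (h_lim : ∀ t > 0, Tendsto (fun i => μ.real {a | t < X i a} / s i) l (𝓝 (exp (-t)))) :
    (∀ᶠ i in l, Integrable (fun a => X i a ^ (k + 1)) μ) ∧
      Tendsto (fun i => (∫ a, X i a ^ (k + 1) ∂μ) / s i) l (𝓝 ((k + 1)! : ℝ)) := by
  have hmeas : ∀ i, Measurable fun t => μ.real {a | t < X i a} :=
    fun i => (antitone_measureReal_lt μ (X i)).measurable
  have hint : ∀ᶠ i in l, IntegrableOn (fun t => t ^ k * μ.real {a | t < X i a}) (Ioi 0) := by
    filter_upwards [h_le] with i hi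
    refine ((integrableOn_pow_mul_exp_neg k).const_mul (C * s i)).mono'
      ((measurable_id.pow_const k).mul (hmeas i)).aestronglyMeasurable
      (ae_restrict_of_forall_mem measurableSet_Ioi fun t (ht : 0 < t) => ?_)
    rw [norm_mul, norm_pow, Real.norm_of_nonneg ht.le, Real.norm_of_nonneg measureReal_nonneg]
    calc t ^ k * μ.real {a | t < X i a} ≤ t ^ k * (C * exp (-t) * s i) := by
          gcongr; exact hi t ht
      _ = C * s i * (t ^ k * exp (-t)) := by ring
  have hcake := hint.mono fun i hi =>
    integrable_pow_succ_and_integral_eq_integral_meas_lt (hX i) (hXm i) k hi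
  refine ⟨hcake.mono fun i hi => hi.1, ?_⟩
  have hF_le : ∀ᶠ i in l, ∀ t > 0, |μ.real {a | t < X i a} / s i| ≤ C * exp (-t) := by
    filter_upwards [h_le, hs] with i hi hsi t ht
    rw [abs_of_nonneg (div_nonneg measureReal_nonneg hsi.le), div_le_iff₀ hsi]
    exact hi t ht
  have hlim := (tendsto_setIntegral_pow_mul_of_tendsto_exp_neg k
    (Eventually.of_forall fun i => ((hmeas i).div_const (s i)).aestronglyMeasurable)
    hF_le h_lim).const_mul ((k : ℝ) + 1)
  rw [Nat.factorial_succ, Nat.cast_mul, Nat.cast_succ]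
  refine hlim.congr' ?_
  filter_upwards [hcake] with i hi
  simp_rw [hi.2, mul_div_assoc', integral_div, mul_div_assoc]

section RegularVariation

variable {S h : ℝ → ℝ} {ρ c : ℝ}

lemma eventually_pos_of_eventuallyEq_rpow_mul (hS : S =ᶠ[atTop] fun y => y ^ ρ * h y)
    (hh : Tendsto h atTop (𝓝 c)) (hc : 0 < c) : ∀ᶠ y in atTop, 0 < S y := by
  filter_upwards [hS, hh.eventually (eventually_gt_nhds hc), eventually_gt_atTop 0]
    with y hSy hhy hy
  rw [hSy]
  exact mul_pos (rpow_pos_of_pos hy ρ) hhy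

lemma tendsto_comp_mul_div_of_eventuallyEq_rpow_mul (hS : S =ᶠ[atTop] fun y => y ^ ρ * h y)
    (hh : Tendsto h atTop (𝓝 c)) (hc : c ≠ 0) {r : ℝ} (hr : 0 < r) :
    Tendsto (fun y => S (y * r) / S y) atTop (𝓝 (r ^ ρ)) := by
  have hmul : Tendsto (fun y => y * r) atTop atTop := tendsto_id.atTop_mul_const hr
  have hlim := tendsto_const_nhds (x := r ^ ρ) |>.mul ((hh.comp hmul).div hh hc)
  rw [div_self hc, mul_one] at hlim
  refine hlim.congr' ?_
  filter_upwards [hmul.eventually hS, hS, eventually_gt_atTop 0] with y hSyr hSy hy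
  simp only [Pi.div_apply, Function.comp_apply, hSyr, hSy, mul_rpow hy.le hr.le]
  field_simp

lemma eventually_comp_mul_le_of_eventuallyEq_rpow_mul (hS : S =ᶠ[atTop] fun y => y ^ ρ * h y)
    (hh : Tendsto h atTop (𝓝 c)) (hc : 0 < c) :
    ∀ᶠ y in atTop, ∀ r ≥ 1, S (y * r) ≤ 4 * r ^ ρ * S y := by
  obtain ⟨a, ha⟩ := eventually_atTop.1 <| hS.and <|
    (hh.eventually (eventually_ge_nhds (half_lt_self hc))).and <|
    (hh.eventually (eventually_le_nhds (lt_two_mul_self hc))).and (eventually_gt_atTop 0)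
  filter_upwards [eventually_ge_atTop a] with y hy r hr
  obtain ⟨hSy, hhy, -, hy0⟩ := ha y hy
  obtain ⟨hSyr, -, hhyr, -⟩ := ha (y * r) (hy.trans (le_mul_of_one_le_right hy0.le hr))
  simp only at hSy hSyr
  rw [hSy, hSyr, mul_rpow hy0.le (zero_le_one.trans hr)]
  calc y ^ ρ * r ^ ρ * h (y * r) ≤ y ^ ρ * r ^ ρ * (4 * h y) := by gcongr; linarith
    _ = 4 * r ^ ρ * (y ^ ρ * h y) := by ring

end RegularVariation

lemma tendsto_zero_of_tendsto_rpow_mul {ε : ℝ → ℝ} {α : ℝ} (hα : 0 < α)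
    (hε : Tendsto (fun y => y ^ α * ε y) atTop (𝓝 0)) : Tendsto ε atTop (𝓝 0) := by
  have hlim := (tendsto_rpow_neg_atTop hα).mul hε
  rw [zero_mul] at hlim
  refine hlim.congr' ?_
  filter_upwards [eventually_gt_atTop 0] with y hy
  rw [← mul_assoc, ← rpow_add hy, neg_add_cancel, rpow_zero, one_mul]

noncomputable def logExcess (γ ω y : ℝ) : ℝ := max (γ⁻¹ * log (y / ω)) 0

lemma logExcess_nonneg (γ ω y : ℝ) : 0 ≤ logExcess γ ω y := le_max_right _ _

lemma lt_logExcess_iff {γ ω y t : ℝ} (hγ : 0 < γ) (hω : 0 < ω) (hy : 0 < y) (ht : 0 ≤ t) :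
    t < logExcess γ ω y ↔ ω * exp (γ * t) < y := by
  rw [logExcess, lt_max_iff, or_iff_left ht.not_gt, inv_mul_eq_div, lt_div_iff₀' hγ,
    lt_log_iff_exp_lt (div_pos hy hω), lt_div_iff₀' hω]

lemma indicator_sq_one_sub_log_eq {γ ω y : ℝ} (hγ : 0 ≤ γ) (hω : 0 < ω) (hy : 0 ≤ y) :
    (Ioi ω).indicator (fun y => (1 - γ⁻¹ * log (y / ω)) ^ 2) y =
      (Ioi ω).indicator 1 y - 2 * logExcess γ ω y + logExcess γ ω y ^ 2 := by
  by_cases hωy : ω < y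
  · have hlog : 0 ≤ γ⁻¹ * log (y / ω) :=
      mul_nonneg (inv_nonneg.2 hγ) (log_nonneg ((one_le_div hω).2 hωy.le))
    simp only [indicator_of_mem (show y ∈ Ioi ω from hωy), logExcess, max_eq_left hlog,
      Pi.one_apply]
    ring
  · have hlog : γ⁻¹ * log (y / ω) ≤ 0 :=
      mul_nonpos_of_nonneg_of_nonpos (inv_nonneg.2 hγ)
        (log_nonpos (div_nonneg hy hω.le) ((div_le_one hω).2 (not_lt.1 hωy)))
    simp [indicator_of_notMem (show y ∉ Ioi ω from hωy), logExcess, max_eq_right hlog]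

section LogExcess

variable {Ω : Type*} [MeasurableSpace Ω] {μ : Measure Ω} {Y : Ω → ℝ} {γ ω : ℝ}

lemma measureReal_lt_logExcess (hYpos : ∀ x, 0 < Y x) (hγ : 0 < γ) (hω : 0 < ω) {t : ℝ}
    (ht : 0 ≤ t) :
    μ.real {x | t < logExcess γ ω (Y x)} = μ.real {x | ω * exp (γ * t) < Y x} := by
  simp only [lt_logExcess_iff hγ hω (hYpos _) ht]

lemma exp_mul_rpow_neg_one_div (hγ : 0 < γ) (t : ℝ) :
    exp (γ * t) ^ (-(1 / γ)) = exp (-t) := by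
  rw [← exp_mul]
  field_simp

lemma tendsto_measureReal_lt_logExcess_div {h : ℝ → ℝ} {c t : ℝ} (hYpos : ∀ x, 0 < Y x)
    (hγ : 0 < γ)
    (hS : (fun y => μ.real {x | y < Y x}) =ᶠ[atTop] fun y => y ^ (-(1 / γ)) * h y)
    (hh : Tendsto h atTop (𝓝 c)) (hc : c ≠ 0) (ht : 0 ≤ t) :
    Tendsto (fun ω => μ.real {x | t < logExcess γ ω (Y x)} / μ.real {x | ω < Y x}) atTop
      (𝓝 (exp (-t))) := by
  rw [← exp_mul_rpow_neg_one_div hγ]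
  refine (tendsto_comp_mul_div_of_eventuallyEq_rpow_mul hS hh hc (exp_pos _)).congr' ?_
  filter_upwards [eventually_gt_atTop 0] with ω hω
  rw [measureReal_lt_logExcess hYpos hγ hω ht]

lemma eventually_measureReal_lt_logExcess_le {h : ℝ → ℝ} {c : ℝ} [IsFiniteMeasure μ]
    (hYpos : ∀ x, 0 < Y x) (hγ : 0 < γ)
    (hS : (fun y => μ.real {x | y < Y x}) =ᶠ[atTop] fun y => y ^ (-(1 / γ)) * h y)
    (hh : Tendsto h atTop (𝓝 c)) (hc : 0 < c) :
    ∀ᶠ ω in atTop, ∀ t ≥ 0,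
      μ.real {x | t < logExcess γ ω (Y x)} ≤ 4 * exp (-t) * μ.real {x | ω < Y x} := by
  filter_upwards [eventually_gt_atTop 0,
    eventually_comp_mul_le_of_eventuallyEq_rpow_mul hS hh hc] with ω hω hle t ht
  rw [measureReal_lt_logExcess hYpos hγ hω ht, ← exp_mul_rpow_neg_one_div hγ]
  exact hle _ (one_le_exp (by positivity))

lemma measurable_logExcess_comp (hYm : Measurable Y) (γ ω : ℝ) :
    Measurable fun x => logExcess γ ω (Y x) :=
  ((measurable_log.comp (hYm.div_const ω)).const_mul γ⁻¹).max measurable_const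

lemma integral_indicator_sq_one_sub_log_eq [IsFiniteMeasure μ] (hYm : Measurable Y)
    (hYpos : ∀ x, 0 < Y x) (hγ : 0 ≤ γ) (hω : 0 < ω)
    (h₁ : Integrable (fun x => logExcess γ ω (Y x)) μ)
    (h₂ : Integrable (fun x => logExcess γ ω (Y x) ^ 2) μ) :
    ∫ x, {x | ω < Y x}.indicator (fun x => (1 - γ⁻¹ * log (Y x / ω)) ^ 2) x ∂μ =
      μ.real {x | ω < Y x} - 2 * ∫ x, logExcess γ ω (Y x) ∂μ +
        ∫ x, logExcess γ ω (Y x) ^ 2 ∂μ := by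
  have hmeas : MeasurableSet {x | ω < Y x} := measurableSet_lt measurable_const hYm
  have hind : Integrable ({x | ω < Y x}.indicator (1 : Ω → ℝ)) μ :=
    (integrable_const 1).indicator hmeas
  have hpt : ∀ x, {x | ω < Y x}.indicator (fun x => (1 - γ⁻¹ * log (Y x / ω)) ^ 2) x =
      {x | ω < Y x}.indicator 1 x - 2 * logExcess γ ω (Y x) + logExcess γ ω (Y x) ^ 2 :=
    fun x => indicator_sq_one_sub_log_eq hγ hω (hYpos x).le
  rw [integral_congr_ae (ae_of_all _ hpt),
    integral_add (f := fun x => _ - _) (hind.sub (h₁.const_mul 2)) h₂,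
    integral_sub hind (h₁.const_mul 2), integral_const_mul, integral_indicator_one hmeas]

end LogExcess

/-- for a Hall-class survival function, the conditional second moment of
the score term `1 − γ⁻¹ log(Y/ω)` given `Y > ω` converges to 1 as `ω → ∞`. -/
theorem hall_class_conditional_second_moment_score
    {Ω : Type*} [MeasurableSpace Ω] (μ : Measure Ω) [IsProbabilityMeasure μ]
    (Y : Ω → ℝ) (hYm : Measurable Y) (hYpos : ∀ x, 0 < Y x)
    (γ α c₀ c₁ : ℝ) (hγ : 0 < γ) (hα : 0 < α) (hc₀ : 0 < c₀)
    (ε : ℝ → ℝ)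
    (hHall : ∃ y₀ : ℝ, ∀ y ≥ y₀,
      (μ {x | Y x > y}).toReal = y ^ (-(1 / γ)) * (c₀ + c₁ * y ^ (-α) + ε y))
    (hε : Tendsto (fun y : ℝ => y ^ α * ε y) atTop (nhds 0)) :
    Tendsto (fun ω : ℝ =>
        (∫ x, Set.indicator {x | ω < Y x} (fun x => (1 - γ⁻¹ * Real.log (Y x / ω)) ^ 2) x ∂μ)
          / (μ {x | ω < Y x}).toReal)
      atTop (nhds 1) := by
  obtain ⟨y₀, hy₀⟩ := hHall
  have hS : (fun y => μ.real {x | y < Y x}) =ᶠ[atTop]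
      fun y => y ^ (-(1 / γ)) * (c₀ + c₁ * y ^ (-α) + ε y) :=
    eventually_atTop.2 ⟨y₀, hy₀⟩
  have hh : Tendsto (fun y => c₀ + c₁ * y ^ (-α) + ε y) atTop (𝓝 c₀) := by
    simpa using (tendsto_const_nhds.add
      (tendsto_const_nhds.mul (tendsto_rpow_neg_atTop hα))).add
      (tendsto_zero_of_tendsto_rpow_mul hα hε)
  have hpos := eventually_pos_of_eventuallyEq_rpow_mul hS hh hc₀
  have h_le := (eventually_measureReal_lt_logExcess_le hYpos hγ hS hh hc₀).mono
    fun _ hω t (ht : 0 < t) => hω t ht.le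
  have h_lim := fun t (ht : 0 < t) =>
    tendsto_measureReal_lt_logExcess_div hYpos hγ hS hh hc₀.ne' ht.le
  obtain ⟨hint₁, hlim₁⟩ := tendsto_integral_pow_succ_div_of_tendsto_exp_neg 0
    (fun ω x => logExcess_nonneg γ ω (Y x)) (measurable_logExcess_comp hYm γ) hpos h_le h_lim
  obtain ⟨hint₂, hlim₂⟩ := tendsto_integral_pow_succ_div_of_tendsto_exp_neg 1
    (fun ω x => logExcess_nonneg γ ω (Y x)) (measurable_logExcess_comp hYm γ) hpos h_le h_lim
  have hlim := (tendsto_const_nhds (x := (1 : ℝ))).sub (hlim₁.const_mul 2) |>.add hlim₂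
  simp only [zero_add, pow_one, Nat.reduceAdd] at hint₁ hint₂
  norm_num at hlim
  refine hlim.congr' ?_
  filter_upwards [hint₁, hint₂, hpos, eventually_gt_atTop 0] with ω h₁ h₂ hSω hω
  rw [← measureReal_def, integral_indicator_sq_one_sub_log_eq hYm hYpos hγ.le hω h₁ h₂]
  field_simp
end
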